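/- arXiv:1502.00890 — 2 statements merged into one kernel-verified Lean document; each statement's English description precedes it below -/
import Mathlib

section
/- Every lattice polygon in ℝ² is normal: for every lattice polygon P and every natural number t ≥ 1, each lattice point of tP is a sum of t lattice points of P. In particular every lattice point of 2P can be written as p₁ + p₂ with p₁, p₂ lattice points of P. -/
open Pointwise
/-- Cast a lattice point of ℤ² to ℝ². -/
def latCast (p : ℤ × ℤ) : ℝ × ℝ := (((p.1 : ℝ)), ((p.2 : ℝ)))

/-!
Induction on `t`. By Carathéodory, `q / t` is a positive combination of affinely independent
points `vᵢ` of `S`, at most three of them; write `q = ∑ aᵢ vᵢ` with `∑ aᵢ = t`. If some `aᵢ ≥ 1`,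
then `q - vᵢ` is a lattice point of `(t - 1) P`. Otherwise `t < 3`, and what remains is a lattice
point `r` of `2T` for a nondegenerate lattice triangle `T = v₀v₁v₂` with all weights in `(0, 1)`.
Then `p = v₀ + v₁ + v₂ - r` is a lattice point of `T` with weights `1 - aᵢ`. If `a₀` is the
smallest weight, `r` lies in twice the triangle `p v₁ v₂`, whose doubled area is `1 - a₀` times
that of `T`; induction on the doubled area, a positive integer, finishes the proof.
-/

open Set

namespace LatticePolygon

@[simp] lemma latCast_add (u v : ℤ × ℤ) : latCast (u + v) = latCast u + latCast v := by
  simp [latCast]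

@[simp] lemma latCast_sub (u v : ℤ × ℤ) : latCast (u - v) = latCast u - latCast v := by
  simp [latCast]

def cross {R : Type*} [CommRing R] (u v : R × R) : R := u.1 * v.2 - u.2 * v.1

lemma cross_latCast (u v : ℤ × ℤ) : cross (latCast u) (latCast v) = ((cross u v : ℤ) : ℝ) := by
  simp [cross, latCast]

section Cross

variable {R : Type*} [CommRing R]

lemma cross_rotate (x y z : R × R) : cross (z - y) (x - y) = cross (y - x) (z - x) := by
  simp only [cross, Prod.fst_sub, Prod.snd_sub]; ring

lemma cross_sub_sub_of_eq {x₀ x₁ x₂ p : R × R} {c₀ c₁ c₂ : R} (hc : c₀ + c₁ + c₂ = 1)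
    (hp : p = c₀ • x₀ + c₁ • x₁ + c₂ • x₂) :
    cross (x₁ - p) (x₂ - p) = c₀ * cross (x₁ - x₀) (x₂ - x₀) := by
  obtain rfl : c₀ = 1 - c₁ - c₂ := by linear_combination hc
  subst hp
  simp only [cross, Prod.fst_sub, Prod.snd_sub, Prod.fst_add, Prod.snd_add, Prod.smul_fst,
    Prod.smul_snd, smul_eq_mul]
  ring

lemma cross_ne_zero_of_affineIndependent {K : Type*} [Field K] {f : Fin 3 → K × K}
    (hf : AffineIndependent K f) : cross (f 1 - f 0) (f 2 - f 0) ≠ 0 := by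
  set u := f 1 - f 0
  set w := f 2 - f 0
  have hindep (α β : K) (h₁ : α * u.1 + β * w.1 = 0) (h₂ : α * u.2 + β * w.2 = 0) :
      α = 0 ∧ β = 0 := by
    have h : α • u + β • w = 0 := Prod.ext h₁ h₂
    have := hf.eq_zero_of_sum_eq_zero (s := Finset.univ) (w := ![-(α + β), α, β])
      (by simp [Fin.sum_univ_three]) (by rw [Fin.sum_univ_three, ← h]; simp [u, w]; module)
    exact ⟨this 1 (by simp), this 2 (by simp)⟩
  intro hc
  rw [cross] at hc
  have h₂ := hindep w.2 (-u.2) (by linear_combination hc) (by ring)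
  have h₁ := hindep w.1 (-u.1) (by ring) (by linear_combination -hc)
  have hu : u = 0 := Prod.ext (neg_eq_zero.1 h₁.2) (neg_eq_zero.1 h₂.2)
  exact one_ne_zero (hindep 1 0 (by simp [hu]) (by simp [hu])).1

end Cross

lemma triple_rotate {α : Type*} (x y z : α) : ({y, z, x} : Set α) = {x, y, z} := by
  rw [pair_comm, insert_comm]

section Convex

variable {E : Type*} [AddCommGroup E] [Module ℝ E]

lemma smul_add_smul_add_smul_mem_convexHull {x₀ x₁ x₂ : E} {a₀ a₁ a₂ : ℝ} (h₀ : 0 ≤ a₀)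
    (h₁ : 0 ≤ a₁) (h₂ : 0 ≤ a₂) (hsum : a₀ + a₁ + a₂ = 1) :
    a₀ • x₀ + a₁ • x₁ + a₂ • x₂ ∈ convexHull ℝ {x₀, x₁, x₂} :=
  mem_convexHull_of_exists_fintype ![a₀, a₁, a₂] ![x₀, x₁, x₂]
    (fun i => by fin_cases i <;> assumption) (by simpa [Fin.sum_univ_three] using hsum)
    (fun i => by fin_cases i <;> simp) (by simp [Fin.sum_univ_three])

lemma sub_mem_convexHull_of_one_le {x₀ x₁ x₂ x : E} {a₀ a₁ a₂ : ℝ} (h₀ : 1 ≤ a₀) (h₁ : 0 ≤ a₁)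
    (h₂ : 0 ≤ a₂) (hsum : a₀ + a₁ + a₂ = 2) (hx : x = a₀ • x₀ + a₁ • x₁ + a₂ • x₂) :
    x - x₀ ∈ convexHull ℝ {x₀, x₁, x₂} := by
  convert smul_add_smul_add_smul_mem_convexHull (sub_nonneg.2 h₀) h₁ h₂
    (by linarith : (a₀ - 1) + a₁ + a₂ = 1) using 1
  rw [hx]; module

lemma sum_smul_sub_mem_smul_convexHull {ι : Type*} [Fintype ι] [DecidableEq ι] {z : ι → E}
    {a : ι → ℝ} (ha : ∀ i, 0 ≤ a i) {s : ℝ} (hs : 0 < s) (hsum : ∑ i, a i = s + 1) {i : ι}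
    (hi : 1 ≤ a i) : ∑ j, a j • z j - z i ∈ s • convexHull ℝ (range z) := by
  set b := a - Pi.single i 1
  have hb : ∀ j, 0 ≤ b j := fun j => by
    rcases eq_or_ne j i with rfl | hj <;> simp [b, *]
  have hbsum : ∑ j, b j = s := by simp [b, Finset.sum_sub_distrib, hsum]
  refine ⟨∑ j, (b j / s) • z j, ?_, ?_⟩
  · refine mem_convexHull_of_exists_fintype _ z (fun j => div_nonneg (hb j) hs.le) ?_
      (fun j => mem_range_self j) rfl
    rw [← Finset.sum_div, hbsum, div_self hs.ne']
  · simp [Finset.smul_sum, smul_smul, mul_div_cancel₀ _ hs.ne', b, sub_smul, Finset.sum_sub_distrib]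

lemma eq_smul_add_smul_add_smul_of_lt_one {x₀ x₁ x₂ x : E} {a₀ a₁ a₂ : ℝ} (ha₀ : a₀ < 1)
    (hx : x = a₀ • x₀ + a₁ • x₁ + a₂ • x₂) :
    x = (a₀ / (1 - a₀)) • (x₀ + x₁ + x₂ - x) + ((a₁ - a₀) / (1 - a₀)) • x₁ +
      ((a₂ - a₀) / (1 - a₀)) • x₂ := by
  have hne : 1 - a₀ ≠ 0 := by linarith
  have key : (1 - a₀) • x = a₀ • (x₀ + x₁ + x₂ - x) + (a₁ - a₀) • x₁ + (a₂ - a₀) • x₂ := by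
    rw [hx]; module
  calc x = (1 - a₀)⁻¹ • ((1 - a₀) • x) := (inv_smul_smul₀ hne x).symm
    _ = _ := by rw [key]; simp only [smul_add, smul_smul, div_eq_inv_mul]

end Convex

lemma natAbs_lt_of_cast_eq_mul {m n : ℤ} {c : ℝ} (hn : n ≠ 0) (h0 : 0 < c) (h1 : c < 1)
    (h : (m : ℝ) = c * n) : m ≠ 0 ∧ m.natAbs < n.natAbs := by
  have hn' : (0 : ℝ) < |(n : ℝ)| := abs_pos.2 (Int.cast_ne_zero.2 hn)
  refine ⟨fun hm => ?_, ?_⟩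
  · rw [hm, Int.cast_zero] at h
    exact hn'.ne' (by simpa [h0.ne'] using congrArg abs h.symm)
  · have : |(m : ℝ)| < |(n : ℝ)| := by
      rw [h, abs_mul, abs_of_pos h0]; nlinarith
    rw [← Int.cast_abs, ← Int.cast_abs, Int.cast_lt, Int.abs_eq_natAbs, Int.abs_eq_natAbs] at this
    exact_mod_cast this

theorem exists_add_eq_of_sum_eq_two {v₀ v₁ v₂ r : ℤ × ℤ} (hv : cross (v₁ - v₀) (v₂ - v₀) ≠ 0)
    {a₀ a₁ a₂ : ℝ} (h₀ : 0 ≤ a₀) (h₁ : 0 ≤ a₁) (h₂ : 0 ≤ a₂) (hsum : a₀ + a₁ + a₂ = 2)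
    (hr : latCast r = a₀ • latCast v₀ + a₁ • latCast v₁ + a₂ • latCast v₂) :
    ∃ p₁ p₂ : ℤ × ℤ, latCast p₁ ∈ convexHull ℝ {latCast v₀, latCast v₁, latCast v₂} ∧
      latCast p₂ ∈ convexHull ℝ {latCast v₀, latCast v₁, latCast v₂} ∧ r = p₁ + p₂ := by
  induction hn : (cross (v₁ - v₀) (v₂ - v₀)).natAbs using Nat.strong_induction_on
    generalizing v₀ v₁ v₂ a₀ a₁ a₂ with
  | _ n ih =>
  wlog hmin : a₀ ≤ a₁ ∧ a₀ ≤ a₂ generalizing v₀ v₁ v₂ a₀ a₁ a₂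
  · rcases le_or_gt a₁ a₂ with h12 | h21
    · obtain ⟨p₁, p₂, hp₁, hp₂, rfl⟩ := this (by rwa [cross_rotate]) h₁ h₂ h₀ (by linarith)
        (by rw [hr]; abel) (by rw [cross_rotate, hn]) ⟨h12, by grind⟩
      exact ⟨p₁, p₂, triple_rotate .. ▸ hp₁, triple_rotate .. ▸ hp₂, rfl⟩
    · obtain ⟨p₁, p₂, hp₁, hp₂, rfl⟩ := this (by rwa [cross_rotate, cross_rotate]) h₂ h₀ h₁
        (by linarith) (by rw [hr]; abel) (by rw [cross_rotate, cross_rotate, hn])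
        ⟨by grind, h21.le⟩
      exact ⟨p₁, p₂, triple_rotate .. ▸ triple_rotate .. ▸ hp₁,
        triple_rotate .. ▸ triple_rotate .. ▸ hp₂, rfl⟩
  by_cases h₁' : 1 ≤ a₁
  · refine ⟨v₁, r - v₁, subset_convexHull ℝ _ (by simp), ?_, by abel⟩
    rw [latCast_sub, ← triple_rotate]
    exact sub_mem_convexHull_of_one_le h₁' h₂ h₀ (by linarith) (by rw [hr]; abel)
  by_cases h₂' : 1 ≤ a₂
  · refine ⟨v₂, r - v₂, subset_convexHull ℝ _ (by simp), ?_, by abel⟩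
    rw [latCast_sub, ← triple_rotate, ← triple_rotate]
    exact sub_mem_convexHull_of_one_le h₂' h₀ h₁ (by linarith) (by rw [hr]; abel)
  rw [not_le] at h₁' h₂'
  set T := convexHull ℝ {latCast v₀, latCast v₁, latCast v₂}
  set p := v₀ + v₁ + v₂ - r
  have hp : latCast p = (1 - a₀) • latCast v₀ + (1 - a₁) • latCast v₁ + (1 - a₂) • latCast v₂ := by
    simp only [p, latCast_sub, latCast_add, hr]; module
  have hpT : latCast p ∈ T := hp ▸ smul_add_smul_add_smul_mem_convexHull (by linarith)
    (by linarith) (by linarith) (by linarith)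
  have hcross : ((cross (v₁ - p) (v₂ - p) : ℤ) : ℝ) = (1 - a₀) * cross (v₁ - v₀) (v₂ - v₀) := by
    rw [← cross_latCast, ← cross_latCast]
    simp only [latCast_sub]
    exact cross_sub_sub_of_eq (by linarith) hp
  obtain ⟨hp0, hplt⟩ := natAbs_lt_of_cast_eq_mul hv (by linarith) (by linarith) hcross
  have hrp := eq_smul_add_smul_add_smul_of_lt_one (by linarith) hr
  rw [← latCast_add, ← latCast_add, ← latCast_sub] at hrp
  obtain ⟨p₁, p₂, hp₁, hp₂, rfl⟩ := ih _ (hn ▸ hplt) hp0 (div_nonneg h₀ (by linarith))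
    (div_nonneg (by linarith) (by linarith)) (div_nonneg (by linarith) (by linarith)) (by
      rw [← add_div, ← add_div, div_eq_iff (by linarith)]; linarith) hrp rfl
  have hsub : convexHull ℝ {latCast p, latCast v₁, latCast v₂} ⊆ T :=
    convexHull_min (insert_subset hpT ((subset_insert _ _).trans (subset_convexHull ℝ _)))
      (convex_convexHull ℝ _)
  exact ⟨p₁, p₂, hsub hp₁, hsub hp₂, rfl⟩

lemma exists_add_eq_of_card_eq_three {ι : Type*} [Fintype ι] (hι : Fintype.card ι = 3)
    {v : ι → ℤ × ℤ} (hv : AffineIndependent ℝ (latCast ∘ v)) {a : ι → ℝ} (ha : ∀ i, 0 ≤ a i)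
    (hsum : ∑ i, a i = 2) {r : ℤ × ℤ} (hr : latCast r = ∑ i, a i • latCast (v i)) :
    ∃ p₁ p₂ : ℤ × ℤ, latCast p₁ ∈ convexHull ℝ (range (latCast ∘ v)) ∧
      latCast p₂ ∈ convexHull ℝ (range (latCast ∘ v)) ∧ r = p₁ + p₂ := by
  set e := (Fintype.equivFinOfCardEq hι).symm
  rw [← e.sum_comp, Fin.sum_univ_three] at hsum hr
  have hcross : cross (v (e 1) - v (e 0)) (v (e 2) - v (e 0)) ≠ 0 := by
    have := cross_ne_zero_of_affineIndependent (hv.comp_embedding e.toEmbedding)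
    simpa [← latCast_sub, cross_latCast] using this
  obtain ⟨p₁, p₂, hp₁, hp₂, rfl⟩ :=
    exists_add_eq_of_sum_eq_two hcross (ha _) (ha _) (ha _) hsum hr
  have hsub : convexHull ℝ {latCast (v (e 0)), latCast (v (e 1)), latCast (v (e 2))} ⊆
      convexHull ℝ (range (latCast ∘ v)) :=
    convexHull_mono (by simp [insert_subset_iff])
  exact ⟨p₁, p₂, hsub hp₁, hsub hp₂, rfl⟩

lemma exists_sub_mem_smul_convexHull (A : Set (ℤ × ℤ)) (t : ℕ) {q : ℤ × ℤ}
    (hq : latCast q ∈ ((t + 2 : ℕ) : ℝ) • convexHull ℝ (latCast '' A)) :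
    ∃ p : ℤ × ℤ, latCast p ∈ convexHull ℝ (latCast '' A) ∧
      latCast (q - p) ∈ ((t + 1 : ℕ) : ℝ) • convexHull ℝ (latCast '' A) := by
  classical
  obtain ⟨y, hy, hyq⟩ := Set.mem_smul_set.1 hq
  obtain ⟨ι, _, z, w, hzA, hind, hw₀, hw₁, rfl⟩ := eq_pos_convex_span_of_mem_convexHull hy
  choose v hvA hv using fun i => hzA (mem_range_self i)
  obtain rfl : z = latCast ∘ v := funext fun i => (hv i).symm
  have hsub : convexHull ℝ (range (latCast ∘ v)) ⊆ convexHull ℝ (latCast '' A) :=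
    convexHull_mono (range_subset_iff.2 fun i => mem_image_of_mem _ (hvA i))
  set a := fun i => ((t + 2 : ℕ) : ℝ) * w i
  have ha : ∀ i, 0 ≤ a i := fun i => mul_nonneg (Nat.cast_nonneg _) (hw₀ i).le
  have hsum : ∑ i, a i = t + 2 := by simp [a, ← Finset.mul_sum, hw₁]
  have hqa : latCast q = ∑ i, a i • latCast (v i) := by
    simp [← hyq, a, Finset.smul_sum, smul_smul]
  by_cases hpeel : ∃ i, 1 ≤ a i
  · obtain ⟨i, hi⟩ := hpeel
    refine ⟨v i, hsub (subset_convexHull ℝ _ (mem_range_self i)), ?_⟩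
    rw [latCast_sub, hqa]
    exact smul_set_mono hsub (sum_smul_sub_mem_smul_convexHull ha (by positivity)
      (by rw [hsum]; push_cast; ring) hi)
  · rw [not_exists] at hpeel
    have hcard : Fintype.card ι ≤ 3 := by
      refine hind.card_le_finrank_succ.trans ?_
      simpa using Nat.add_le_add_right (Submodule.finrank_le (vectorSpan ℝ (range (latCast ∘ v)))) 1
    have hlt : (t + 2 : ℝ) < Fintype.card ι := by
      have : Nonempty ι := by
        by_contra h
        simp [not_nonempty_iff.1 h] at hw₁
      rw [← hsum, Fintype.card_eq_sum_ones, Nat.cast_sum, Nat.cast_one]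
      exact Finset.sum_lt_sum_of_nonempty Finset.univ_nonempty fun i _ => lt_of_not_ge (hpeel i)
    obtain ⟨rfl, h3⟩ : t = 0 ∧ Fintype.card ι = 3 := by
      have : t + 2 < Fintype.card ι := by exact_mod_cast hlt
      omega
    obtain ⟨p₁, p₂, hp₁, hp₂, rfl⟩ :=
      exists_add_eq_of_card_eq_three h3 hind ha (by simpa using hsum) hqa
    exact ⟨p₁, hsub hp₁, by simpa using hsub hp₂⟩

end LatticePolygon

theorem stmt4_general (S : Finset (ℤ × ℤ))
    (P : Set (ℝ × ℝ)) (hP : P = convexHull ℝ (latCast '' (S : Set (ℤ × ℤ))))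
    (t : ℕ)
    (q : ℤ × ℤ) (hq : latCast q ∈ (t : ℝ) • P) :
    ∃ c : Fin t → ℤ × ℤ, (∀ i, latCast (c i) ∈ P) ∧ q = ∑ i, c i := by
  subst hP
  induction t using Nat.twoStepInduction generalizing q with
  | zero =>
    have hq0 : latCast q ∈ (0 : Set (ℝ × ℝ)) := Set.zero_smul_set_subset _ (by simpa using hq)
    exact ⟨Fin.elim0, Fin.rec0, by simpa [latCast, Prod.ext_iff] using hq0⟩
  | one => exact ⟨fun _ => q, fun _ => by simpa using hq, by simp⟩
  | more t _ ih =>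
    obtain ⟨p, hp, hqp⟩ := LatticePolygon.exists_sub_mem_smul_convexHull _ t hq
    obtain ⟨c, hc, hsum⟩ := ih (q - p) hqp
    exact ⟨Fin.cons p c, Fin.cases hp hc, by simp [Fin.sum_univ_succ, ← hsum]⟩

theorem stmt4 (S : Finset (ℤ × ℤ))
    (hdim : affineSpan ℝ (latCast '' (S : Set (ℤ × ℤ))) = ⊤)
    (P : Set (ℝ × ℝ)) (hP : P = convexHull ℝ (latCast '' (S : Set (ℤ × ℤ))))
    (t : ℕ) (ht : 1 ≤ t)
    (q : ℤ × ℤ) (hq : latCast q ∈ (t : ℝ) • P) :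
    ∃ c : Fin t → ℤ × ℤ, (∀ i, latCast (c i) ∈ P) ∧ q = ∑ i, c i :=
  stmt4_general S P hP t q hq
end

section
/- For a Hirzebruch quadrilateral, H_{2a-1, b-1, n} is contained in 2·H_{a,b,n} whenever a, b ≥ 1 and n ≥ 0; moreover H_{2a-1,b-1,n} is a proper subset of 2·H_{a,b,n}. -/
open Pointwise

/-- The Hirzebruch quadrilateral with vertices (0,0), (x,0), (0,y), (x+ny,y). -/
noncomputable def hirzebruch (x y n : ℕ) : Set (ℝ × ℝ) :=
  convexHull ℝ {((0 : ℝ), (0 : ℝ)), ((x : ℝ), 0), (0, (y : ℝ)), (((x : ℝ) + (n : ℝ) * (y : ℝ)), (y : ℝ))}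

/-!
Slicing at height `q`, the quadrilateral `H_{x,y,n}` is the segment from `(0,q)` to `(x+nq,q)`,
so `H_{x,y,n} = {(u,q) | 0 ≤ q ≤ y, 0 ≤ u ≤ x + nq}`. In this description `H` is visibly monotone
in `x` and `y`, and `(x,0)` lies in `H_{x,y,n}` but not in `H_{x',y',n}` for `x' < x`. Since
`2·H_{a,b,n} = H_{2a,2b,n}`, it remains to compare `2a-1 < 2a` and `b-1 ≤ 2b`.
-/

def trapezoid (x y n : ℝ) : Set (ℝ × ℝ) :=
  {p | 0 ≤ p.2 ∧ p.2 ≤ y ∧ 0 ≤ p.1 ∧ p.1 ≤ x + n * p.2}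

theorem convex_trapezoid (x y n : ℝ) : Convex ℝ (trapezoid x y n) := by
  rintro ⟨u, q⟩ ⟨hq, hqy, hu, hux⟩ ⟨u', q'⟩ ⟨hq', hqy', hu', hux'⟩ a b ha hb hab
  dsimp only at *
  simp only [Prod.smul_mk, Prod.mk_add_mk, smul_eq_mul]
  have hsplit (c : ℝ) : c = a * c + b * c := by rw [← add_mul, hab, one_mul]
  refine ⟨by positivity, ?_, by positivity, ?_⟩
  · linarith [mul_le_mul_of_nonneg_left hqy ha, mul_le_mul_of_nonneg_left hqy' hb, hsplit y]
  · linarith [mul_le_mul_of_nonneg_left hux ha, mul_le_mul_of_nonneg_left hux' hb, hsplit x]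

theorem trapezoid_subset_trapezoid {x y x' y' n : ℝ} (hx : x' ≤ x) (hy : y' ≤ y) :
    trapezoid x' y' n ⊆ trapezoid x y n :=
  fun _ ⟨hq, hqy, hu, hux⟩ => ⟨hq, hqy.trans hy, hu, hux.trans (by linarith)⟩

theorem mk_zero_mem_trapezoid_iff {x y n : ℝ} (u : ℝ) (hy : 0 ≤ y) :
    (u, 0) ∈ trapezoid x y n ↔ 0 ≤ u ∧ u ≤ x := by
  simp [trapezoid, hy]

theorem convexHull_quadrilateral_eq_trapezoid {x y n : ℝ} (hx : 0 ≤ x) (hy : 0 ≤ y) (hn : 0 ≤ n) :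
    convexHull ℝ {((0 : ℝ), (0 : ℝ)), (x, 0), (0, y), (x + n * y, y)} = trapezoid x y n := by
  set H := convexHull ℝ ({((0 : ℝ), (0 : ℝ)), (x, 0), (0, y), (x + n * y, y)} : Set (ℝ × ℝ))
  apply subset_antisymm
  · refine convexHull_min ?_ (convex_trapezoid x y n)
    rintro p (rfl | rfl | rfl | rfl) <;> refine ⟨?_, ?_, ?_, ?_⟩ <;> dsimp only <;>
      first | positivity | linarith
  · rintro ⟨u, q⟩ ⟨hq, hqy, hu, hux⟩
    have hconv : Convex ℝ H := convex_convexHull ℝ _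
    have hleft : ((0 : ℝ), q) ∈ segment ℝ ((0 : ℝ), (0 : ℝ)) (0, y) := by
      rw [← Prod.image_mk_segment_right, segment_eq_Icc hy]
      exact ⟨q, ⟨hq, hqy⟩, rfl⟩
    have hright : (x + n * q, q) ∈ segment ℝ (x, (0 : ℝ)) (x + n * y, y) := by
      rcases hq.eq_or_lt with rfl | hq
      · simpa using left_mem_segment ℝ (x, (0 : ℝ)) (x + n * y, y)
      · have hy : 0 < y := hq.trans_le hqy
        refine ⟨1 - q / y, q / y, by linarith [(div_le_one hy).2 hqy], by positivity, by ring, ?_⟩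
        simp only [Prod.smul_mk, smul_eq_mul, mul_zero, Prod.mk_add_mk, zero_add, Prod.ext_iff]
        constructor
        · field_simp
          ring
        · field_simp
    have hslice : (u, q) ∈ segment ℝ ((0 : ℝ), q) (x + n * q, q) := by
      rw [← Prod.image_mk_segment_left, segment_eq_Icc (hu.trans hux)]
      exact ⟨u, ⟨hu, hux⟩, rfl⟩
    have hvertex {p : ℝ × ℝ} (hp : p ∈ ({((0 : ℝ), (0 : ℝ)), (x, 0), (0, y), (x + n * y, y)} :
        Set (ℝ × ℝ))) : p ∈ H := subset_convexHull ℝ _ hp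
    refine hconv.segment_subset ?_ ?_ hslice
    · exact hconv.segment_subset (hvertex (by simp)) (hvertex (by simp)) hleft
    · exact hconv.segment_subset (hvertex (by simp)) (hvertex (by simp)) hright

theorem hirzebruch_eq_trapezoid (x y n : ℕ) : hirzebruch x y n = trapezoid x y n :=
  convexHull_quadrilateral_eq_trapezoid x.cast_nonneg y.cast_nonneg n.cast_nonneg

theorem smul_hirzebruch (c x y n : ℕ) :
    (c : ℝ) • hirzebruch x y n = hirzebruch (c * x) (c * y) n := by
  rw [hirzebruch, hirzebruch, ← convexHull_smul]
  congr 1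
  simp only [Set.smul_set_insert, Set.smul_set_singleton, Prod.smul_mk, smul_eq_mul, mul_zero,
    Nat.cast_mul]
  ring_nf

theorem hirzebruch_ssubset_hirzebruch {x y x' y' : ℕ} (n : ℕ) (hx : x' < x) (hy : y' ≤ y) :
    hirzebruch x' y' n ⊂ hirzebruch x y n := by
  have hx' : (x' : ℝ) < x := by exact_mod_cast hx
  rw [hirzebruch_eq_trapezoid, hirzebruch_eq_trapezoid]
  refine ⟨trapezoid_subset_trapezoid hx'.le (by exact_mod_cast hy), fun h => ?_⟩
  have hcorner : ((x : ℝ), (0 : ℝ)) ∈ trapezoid x y n :=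
    (mk_zero_mem_trapezoid_iff _ y.cast_nonneg).2 ⟨x.cast_nonneg, le_rfl⟩
  have := ((mk_zero_mem_trapezoid_iff _ y'.cast_nonneg).1 (h hcorner)).2
  linarith

theorem stmt10_general (a b n : ℕ) (ha : 1 ≤ a) :
    hirzebruch (2 * a - 1) (b - 1) n ⊂ (2 : ℝ) • hirzebruch a b n := by
  rw [show (2 : ℝ) = (2 : ℕ) by norm_num, smul_hirzebruch]
  exact hirzebruch_ssubset_hirzebruch n (by omega) (by omega)

theorem stmt10 (a b n : ℕ) (ha : 1 ≤ a) (hb : 1 ≤ b) :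
    hirzebruch (2 * a - 1) (b - 1) n ⊂ (2 : ℝ) • hirzebruch a b n :=
  stmt10_general a b n ha
end
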